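/- Let 0 → A → C → B → 0 be a short exact sequence 𝓔 in 𝒜, let 0 → A → J•, 0 → B → K•, 0 → C → L• be F-acyclic resolutions, and let 𝐄 = (0 → J• → L• → K• → 0) be a short exact sequence of complexes whose augmentations form a commutative diagram with 𝓔. Then for every i ≥ 0 the square commutes: c^{i+1} ∘ δ^i_{F𝐄} = ∂^i_𝓔 ∘ c^i, where δ^i_{F𝐄} : H^i(FK•) → H^{i+1}(FJ•) is the connecting homomorphism of the short exact sequence of complexes 0 → FJ• → FL• → FK• → 0, ∂^i_𝓔 : R^iFB → R^{i+1}FA is the connecting homomorphism of the derived-functor long exact sequence of 𝓔, and c^i : H^i(FK•) → R^iFB, c^{i+1} : H^{i+1}(FJ•) → R^{i+1}FA are the canonical isomorphisms. -/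

import Mathlib

set_option linter.unusedSectionVars false

open CategoryTheory CategoryTheory.Limits HomologicalComplex

section PlainComplexes

variable {A : Type*} [Category A] [Abelian A]

/-- The shifted complex `C_{[j]}` with `C_{[j]}^p = C^{j+p}` and the differentials of `C`. -/
noncomputable def shiftedC (C : CochainComplex A ℕ) (j : ℕ) : CochainComplex A ℕ :=
  CochainComplex.of (fun p => C.X (j + p)) (fun p => C.d (j + p) (j + p + 1))
    (fun _ => C.d_comp_d _ _ _)

lemma shiftedC_d (C : CochainComplex A ℕ) (j p : ℕ) :
    (shiftedC C j).d p (p + 1) = C.d (j + p) (j + p + 1) :=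
  CochainComplex.of_d _ (fun p => C.d (j + p) (j + p + 1)) p

/-- The canonical identification `H^{t+1}(C_{[j]}) ≅ H^{j+t+1}(C)`. -/
noncomputable def shiftHomologyIso (C : CochainComplex A ℕ) (j t n : ℕ) (hn : j + t + 1 = n) :
    (shiftedC C j).homology (t + 1) ≅ C.homology n := by
  subst hn
  refine (shiftedC C j).homologyIsoSc' t (t+1) (t+2) (by simp) (by simp) ≪≫
    ShortComplex.homologyMapIso ?_ ≪≫
      (C.homologyIsoSc' (j+t) (j+t+1) (j+t+2) (by simp) (by simp)).symm
  refine ShortComplex.isoMk (Iso.refl _) (Iso.refl _) (Iso.refl _) ?_ ?_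
  · simp only [Iso.refl_hom, Category.id_comp, Category.comp_id]
    exact (Category.id_comp _).trans ((shiftedC_d C j t).symm.trans (Category.comp_id _).symm)
  · simp only [Iso.refl_hom, Category.id_comp, Category.comp_id]
    exact (Category.id_comp _).trans
      ((shiftedC_d C j (t+1)).symm.trans (Category.comp_id _).symm)

/-- The canonical comparison map `H^0(C_{[j]}) ⟶ H^j(C)`, induced by the identification of
`H^0(C_{[j]})` with the cycles of `C` in degree `j`. -/
noncomputable def shiftHomologyMap₀ (C : CochainComplex A ℕ) (j : ℕ) :
    (shiftedC C j).homology 0 ⟶ C.homology j :=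
  (CochainComplex.isoHomologyπ₀ _).inv ≫
    C.liftCycles (show (shiftedC C j).cycles 0 ⟶ C.X j from (shiftedC C j).iCycles 0)
      (j + 1) (by simp)
      (by
        rw [show C.d j (j+1) = (shiftedC C j).d 0 1 from (shiftedC_d C j 0).symm]
        exact (shiftedC C j).iCycles_d 0 1) ≫ C.homologyπ j

/-- The differential of the complex `L_i`, given in matrix form (acting on column vectors) by
`(x, y) ↦ (δ x + (-1)^{p+1} y, δ y)`. -/
noncomputable def Ldiff (C : CochainComplex A ℕ) (i p : ℕ) :
    (C.X (i + p) ⊞ C.X (i + p + 1) : A) ⟶ (C.X (i + p + 1) ⊞ C.X (i + p + 2) : A) :=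
  biprod.desc (C.d (i + p) (i + p + 1) ≫ biprod.inl)
    (((-1 : ℤ) ^ (p + 1)) • biprod.inl + C.d (i + p + 1) (i + p + 2) ≫ biprod.inr)

lemma Ldiff_comp_Ldiff (C : CochainComplex A ℕ) (i p : ℕ) :
    Ldiff C i p ≫ Ldiff C i (p + 1) = 0 := by
  ext
  · simp [Ldiff]
    exact C.d_comp_d _ _ _
  · simp [Ldiff]
  · simp [Ldiff, pow_succ]
    exact neg_add_cancel _
  · simp [Ldiff]
    exact C.d_comp_d _ _ _

/-- The complex `L_i` with `L_i^p = C^{i+p} ⊕ C^{i+p+1}` and differential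
`(x, y) ↦ (δ x + (-1)^{p+1} y, δ y)`. -/
noncomputable def Lcx (C : CochainComplex A ℕ) (i : ℕ) : CochainComplex A ℕ :=
  CochainComplex.of (fun p => C.X (i + p) ⊞ C.X (i + p + 1)) (Ldiff C i)
    (Ldiff_comp_Ldiff C i)

lemma Lcx_d (C : CochainComplex A ℕ) (i p : ℕ) :
    (Lcx C i).d p (p + 1) = Ldiff C i p :=
  CochainComplex.of_d _ (Ldiff C i) p

/-- The augmentation `J^i ⟶ L_i^0 = J^i ⊕ J^{i+1}`, given by the column vector `(1, δ^i)`. -/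
noncomputable def Laug (C : CochainComplex A ℕ) (i : ℕ) :
    C.X i ⟶ (Lcx C i).X 0 :=
  biprod.lift (𝟙 (C.X i)) (C.d i (i + 1))

lemma d_eqToHom (C : CochainComplex A ℕ) {a a' b b' : ℕ} (ha : a = a') (hb : b = b') :
    C.d a' b' = eqToHom (congrArg C.X ha.symm) ≫ C.d a b ≫ eqToHom (congrArg C.X hb) := by
  subst ha; subst hb; simp

/-- The levelwise inclusions `K_i^p = C^{i+p} ⟶ L_i^p = C^{i+p} ⊕ C^{i+p+1}` as a chain
map `K_i ⟶ L_i`. -/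
noncomputable def Lincl (C : CochainComplex A ℕ) (i : ℕ) : shiftedC C i ⟶ Lcx C i where
  f _ := biprod.inl
  comm' := by
    rintro p q rfl
    rw [Lcx_d, shiftedC_d, Ldiff]
    exact biprod.inl_desc _ _

/-- The levelwise projections `L_i^p = C^{i+p} ⊕ C^{i+p+1} ⟶ K_{i+1}^p = C^{i+p+1}` as a
chain map `L_i ⟶ K_{i+1}`. -/
noncomputable def Lproj (C : CochainComplex A ℕ) (i : ℕ) : Lcx C i ⟶ shiftedC C (i + 1) where
  f p := biprod.snd ≫ eqToHom (show C.X (i + p + 1) = (shiftedC C (i + 1)).X p by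
    rw [show (shiftedC C (i + 1)).X p = C.X (i + 1 + p) from rfl,
      show i + 1 + p = i + p + 1 by omega])
  comm' := by
    rintro p q rfl
    rw [Lcx_d, shiftedC_d,
      d_eqToHom C (show i + p + 1 = i + 1 + p by omega)
        (show i + 1 + p + 1 = i + p + 2 by omega).symm]
    refine biprod.hom_ext' _ _ ?_ ?_
    · have h : C.d (i+p) (i+p+1) ≫
          (biprod.inl : C.X (i+p+1) ⟶ C.X (i+p+1) ⊞ C.X (i+p+2)) ≫ biprod.snd ≫
            eqToHom (show (C.X (i+p+2) : A) = C.X (i+1+(p+1)) by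
              rw [show i+1+(p+1) = i+p+2 by omega]) = 0 := by simp
      rw [Ldiff]
      first
        | (dsimp only [Lcx, shiftedC] at *
           simp only [biprod.inl_desc_assoc, Category.assoc, biprod.inl_snd_assoc,
             Limits.zero_comp]
           exact h.symm)
        | (refine Eq.trans ?_ (Eq.trans h.symm ?_)
           · simp only [Category.assoc]; erw [biprod.inl_snd_assoc, Limits.zero_comp]
           · erw [biprod.inl_desc_assoc]; simp only [Category.assoc])
        | (erw [biprod.inl_desc_assoc]; simp only [Category.assoc];
           erw [biprod.inl_snd_assoc, Limits.zero_comp]; exact h.symm)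
        | (erw [biprod.inl_snd_assoc, Limits.zero_comp]; exact h.symm)
        | (simp [Ldiff]; done)
    · have h : ((-1 : ℤ)^(p+1)) •
          ((biprod.inl : C.X (i+p+1) ⟶ C.X (i+p+1) ⊞ C.X (i+p+2)) ≫ biprod.snd ≫
            eqToHom (show (C.X (i+p+2) : A) = C.X (i+1+(p+1)) by
              rw [show i+1+(p+1) = i+p+2 by omega])) +
          C.d (i+p+1) (i+p+2) ≫
          (biprod.inr : C.X (i+p+2) ⟶ C.X (i+p+1) ⊞ C.X (i+p+2)) ≫ biprod.snd ≫
            eqToHom (show (C.X (i+p+2) : A) = C.X (i+1+(p+1)) by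
              rw [show i+1+(p+1) = i+p+2 by omega]) =
          C.d (i+p+1) (i+p+2) ≫
            eqToHom (show (C.X (i+p+2) : A) = C.X (i+1+(p+1)) by
              rw [show i+1+(p+1) = i+p+2 by omega]) := by simp
      rw [Ldiff]
      first
        | (dsimp only [Lcx, shiftedC] at *
           simp only [biprod.inr_desc_assoc, Preadditive.add_comp, Preadditive.zsmul_comp,
             Category.assoc, biprod.inr_snd_assoc, eqToHom_trans_assoc, eqToHom_refl,
             Category.id_comp]
           first
             | exact h.symm
             | (refine Eq.trans ?_ h.symm; simp)
             | (refine Eq.trans ?_ h.symm; erw [eqToHom_trans_assoc]; simp))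
        | (dsimp only [Lcx, shiftedC] at *
           simp only [biprod.inr_desc_assoc, Preadditive.add_comp, Preadditive.zsmul_comp,
             Category.assoc, biprod.inr_snd_assoc, eqToHom_trans_assoc, eqToHom_refl,
             Category.id_comp]
           exact h.symm)
        | (refine Eq.trans ?_ (Eq.trans h.symm ?_)
           · simp only [Category.assoc]; erw [biprod.inr_snd_assoc]
             simp only [eqToHom_trans_assoc, eqToHom_refl, Category.id_comp]
           · erw [biprod.inr_desc_assoc]; simp only [Category.assoc, Preadditive.add_comp,
               Preadditive.zsmul_comp])
        | (erw [biprod.inr_desc_assoc]; simp only [Category.assoc];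
           erw [biprod.inr_snd_assoc]; simp only [eqToHom_trans_assoc, eqToHom_refl,
             Category.id_comp]; exact h.symm)
        | (erw [biprod.inr_snd_assoc]; simp only [eqToHom_trans_assoc, eqToHom_refl,
             Category.id_comp]; exact h.symm)
        | (simp [Ldiff]; done)

end PlainComplexes

section PlainComplexes2

variable {A : Type*} [Category A] [Abelian A]

/-- `0 ⟶ K_i ⟶ L_i ⟶ K_{i+1} ⟶ 0` as a short complex of cochain complexes. -/
noncomputable def Lses (C : CochainComplex A ℕ) (i : ℕ) :
    ShortComplex (CochainComplex A ℕ) :=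
  ShortComplex.mk (Lincl C i) (Lproj C i) (by
    ext p
    simp only [Lincl, Lproj, HomologicalComplex.comp_f, HomologicalComplex.zero_f_apply]
    exact (biprod.inl_snd_assoc _).trans Limits.zero_comp)

/-- In each degree, `0 ⟶ K_i^p ⟶ L_i^p ⟶ K_{i+1}^p ⟶ 0` is split. -/
noncomputable def LsesSplitting (C : CochainComplex A ℕ) (i p : ℕ) :
    ((Lses C i).map (HomologicalComplex.eval A (ComplexShape.up ℕ) p)).Splitting where
  r := biprod.fst
  s := eqToHom (show (shiftedC C (i + 1)).X p = C.X (i + p + 1) by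
        rw [show (shiftedC C (i + 1)).X p = C.X (i + 1 + p) from rfl,
          show i + 1 + p = i + p + 1 by omega]) ≫ biprod.inr
  f_r := by exact biprod.inl_fst
  s_g := by
    first
      | (dsimp [Lses, Lincl, Lproj, Lcx, shiftedC]; simp; done)
      | (dsimp [Lses, Lproj]
         refine (Category.assoc _ _ _).trans ?_
         refine (congrArg (_ ≫ ·) (biprod.inr_snd_assoc _)).trans ?_
         exact (eqToHom_trans _ _).trans (eqToHom_refl _ _))
  id := by
    dsimp [Lses, Lincl, Lproj]
    first
      | (dsimp [Lcx, shiftedC]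
         simp only [Category.assoc, eqToHom_trans_assoc, eqToHom_refl, Category.id_comp]
         exact biprod.total)
      | (refine Eq.trans ?_ biprod.total
         refine congrArg (_ + ·) ?_
         refine (Category.assoc _ _ _).trans (congrArg (biprod.snd ≫ ·) ?_)
         exact (eqToHom_trans_assoc _ _ _).trans
           ((congrArg (· ≫ biprod.inr) (eqToHom_refl _ _)).trans (Category.id_comp _)))
      | (refine Eq.trans ?_ biprod.total
         congr 1
         refine (Category.assoc _ _ _).trans (congrArg (biprod.snd ≫ ·) ?_)
         simp)

lemma Lses_shortExact (C : CochainComplex A ℕ) (i : ℕ) : (Lses C i).ShortExact := by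
  rw [HomologicalComplex.shortExact_iff_degreewise_shortExact]
  intro p
  exact (LsesSplitting C i p).shortExact

end PlainComplexes2

section Derived

variable {A : Type*} [Category A] [Abelian A] [EnoughInjectives A]
variable {B : Type*} [Category B] [Abelian B]

/-- An object `X` is `F`-acyclic if `R^iF X = 0` for all `i ≥ 1`. -/
def IsFAcyclic (F : A ⥤ B) [F.Additive] (X : A) : Prop :=
  ∀ i : ℕ, 1 ≤ i → IsZero ((F.rightDerived i).obj X)

/-- An `F`-acyclic resolution `0 → M → J⁰ → J¹ → ⋯` of `M`: an exact complex
(encoded, as for `InjectiveResolution`, by a quasi-isomorphism from the complex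
consisting of `M` placed in degree `0`) all of whose terms are `F`-acyclic. -/
structure FAcyclicResolution (F : A ⥤ B) [F.Additive] (M : A) where
  cocomplex : CochainComplex A ℕ
  ι : (CochainComplex.single₀ A).obj M ⟶ cocomplex
  quasiIso : QuasiIso ι := by infer_instance
  acyclic : ∀ n : ℕ, IsFAcyclic F (cocomplex.X n)

attribute [instance] FAcyclicResolution.quasiIso

/-- The canonical comparison map `Hⁿ(F J•) ⟶ RⁿF M` induced by a chain map
`f : J• ⟶ I•` to an injective resolution (lying over `𝟙 M`). -/
noncomputable def canonicalMap (F : A ⥤ B) [F.Additive] {M : A}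
    (J : FAcyclicResolution F M) (I : InjectiveResolution M)
    (f : J.cocomplex ⟶ I.cocomplex) (n : ℕ) :
    ((F.mapHomologicalComplex (ComplexShape.up ℕ)).obj J.cocomplex).homology n ⟶
      (F.rightDerived n).obj M :=
  HomologicalComplex.homologyMap ((F.mapHomologicalComplex (ComplexShape.up ℕ)).map f) n ≫
    (I.isoRightDerivedObj F n).inv

/-- Horseshoe data over a short exact sequence `S = (0 → X₁ → X₂ → X₃ → 0)`:
injective resolutions of the three terms together with a short exact sequence of
complexes among them whose augmentations commute with the maps of `S`.  This is the
data used to define the connecting homomorphisms of the long exact sequence of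
derived functors; it exists by the horseshoe lemma. -/
structure HorseshoeData (S : ShortComplex A) where
  I₁ : InjectiveResolution S.X₁
  I₂ : InjectiveResolution S.X₂
  I₃ : InjectiveResolution S.X₃
  f : I₁.cocomplex ⟶ I₂.cocomplex
  g : I₂.cocomplex ⟶ I₃.cocomplex
  zero : f ≫ g = 0
  shortExact : (ShortComplex.mk f g zero).ShortExact
  comm₁ : I₁.ι ≫ f = (CochainComplex.single₀ A).map S.f ≫ I₂.ι
  comm₂ : I₂.ι ≫ g = (CochainComplex.single₀ A).map S.g ≫ I₃.ι

/-- Applying an additive functor to the (degreewise split, since `I₁` is degreewise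
injective) short exact sequence of complexes of a horseshoe datum yields a short
exact sequence of complexes. -/
lemma HorseshoeData.map_shortExact (F : A ⥤ B) [F.Additive] {S : ShortComplex A}
    (D : HorseshoeData S) :
    ((ShortComplex.mk D.f D.g D.zero).map
      (F.mapHomologicalComplex (ComplexShape.up ℕ))).ShortExact := by
  have hdeg := (HomologicalComplex.shortExact_iff_degreewise_shortExact _).1 D.shortExact
  rw [HomologicalComplex.shortExact_iff_degreewise_shortExact]
  intro n
  haveI : Injective ((ShortComplex.mk D.f D.g D.zero).map
      (HomologicalComplex.eval A (ComplexShape.up ℕ) n)).X₁ :=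
    (inferInstance : Injective (D.I₁.cocomplex.X n))
  exact (((hdeg n).splittingOfInjective).map F).shortExact

/-- The connecting homomorphism `∂^i_𝓔 : R^iF X₃ ⟶ R^{i+1}F X₁` of the long exact
sequence of derived functors associated to a short exact sequence
`𝓔 = (0 → X₁ → X₂ → X₃ → 0)`, computed from a choice of horseshoe data. -/
noncomputable def derivedδ (F : A ⥤ B) [F.Additive] {S : ShortComplex A}
    (D : HorseshoeData S) (i : ℕ) :
    (F.rightDerived i).obj S.X₃ ⟶ (F.rightDerived (i + 1)).obj S.X₁ :=
  (D.I₃.isoRightDerivedObj F i).hom ≫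
    (D.map_shortExact F).δ i (i + 1) rfl ≫
    (D.I₁.isoRightDerivedObj F (i + 1)).inv

/-- The short exact sequence `E_{q+1} = (0 → Z^q → J^q → Z^{q+1} → 0)` in which
`Z^q = ker(δ^q)` (realized as `J.cycles q`) and the second map is the corestriction
of the differential. -/
noncomputable def cyclesSeq (J : CochainComplex A ℕ) (q : ℕ) : ShortComplex A :=
  ShortComplex.mk (J.iCycles q) (J.toCycles q (q + 1))
    (by rw [← cancel_mono (J.iCycles (q + 1))]; simp)

/-- The sequence `0 → Z^q → J^q → Z^{q+1} → 0` is short exact as soon as `J` is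
exact in degree `q+1`. -/
lemma cyclesSeq_shortExact (J : CochainComplex A ℕ) (q : ℕ) (hJ : J.ExactAt (q + 1)) :
    (cyclesSeq J q).ShortExact := by
  have hepi : Epi (J.toCycles q (q + 1)) := by
    have he := (J.exactAt_iff' q (q+1) (q+2) (by simp) (by simp)).1 hJ
    have := he.epi_toCycles
    have heq := J.toCycles_cyclesIsoSc'_hom q (q+1) (q+2) (by simp) (by simp)
    have : J.toCycles q (q+1) = (J.sc' q (q+1) (q+2)).toCycles ≫
        (J.cyclesIsoSc' q (q+1) (q+2) (by simp) (by simp)).inv := by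
      exact ((Iso.comp_inv_eq _).2 heq.symm).symm
    rw [this]
    exact @epi_comp _ _ _ _ _ _ he.epi_toCycles _ _
  exact {
    mono_f := by dsimp [cyclesSeq]; infer_instance
    epi_g := hepi
    exact := by
      apply ShortComplex.exact_of_f_is_kernel
      exact KernelFork.IsLimit.ofι _ _
        (fun {W'} (k : W' ⟶ J.X q) hk => J.liftCycles k (q+1) (by simp)
          (by
            have hk' : k ≫ J.toCycles q (q+1) = 0 := hk
            rw [← J.toCycles_i q (q+1), ← Category.assoc, hk', Limits.zero_comp]))
        (fun {W'} k hk => J.liftCycles_i _ _ _ _)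
        (fun {W'} k hk m hm =>
          (cancel_mono (J.iCycles q)).1 (hm.trans (J.liftCycles_i _ _ _ _).symm)) }

end Derived

section MoreDefs

variable {A : Type*} [Category A] [Abelian A]
variable {B : Type*} [Category B] [Abelian B]

/-- Applying a functor commutes with shifting a complex. -/
noncomputable def mapShiftedIso (F : A ⥤ B) [F.Additive] (J : CochainComplex A ℕ) (q : ℕ) :
    (F.mapHomologicalComplex (ComplexShape.up ℕ)).obj (shiftedC J q) ≅
      shiftedC ((F.mapHomologicalComplex (ComplexShape.up ℕ)).obj J) q :=
  HomologicalComplex.Hom.isoOfComponents (fun _ => Iso.refl _) (by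
    rintro p p' rfl
    simp only [Iso.refl_hom, Category.id_comp, Category.comp_id,
      Functor.mapHomologicalComplex_obj_d]
    rw [shiftedC_d, shiftedC_d]
    exact (Category.id_comp _).trans (Category.comp_id _).symm)

/-- The canonical identification `H^{t+1}(F(K_q)) ≅ H^{q+t+1}(F(J))` for the shifted
complex `K_q = J_{[q]}`. -/
noncomputable def FshiftHomologyIso (F : A ⥤ B) [F.Additive] (J : CochainComplex A ℕ)
    (q t n : ℕ) (hn : q + t + 1 = n) :
    ((F.mapHomologicalComplex (ComplexShape.up ℕ)).obj (shiftedC J q)).homology (t + 1) ≅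
      ((F.mapHomologicalComplex (ComplexShape.up ℕ)).obj J).homology n :=
  (HomologicalComplex.homologyFunctor B (ComplexShape.up ℕ) (t + 1)).mapIso
    (mapShiftedIso F J q) ≪≫
    shiftHomologyIso ((F.mapHomologicalComplex (ComplexShape.up ℕ)).obj J) q t n hn

/-- The canonical comparison map `H^0(F(K_q)) ⟶ H^q(F(J))`. -/
noncomputable def FshiftHomologyMap₀ (F : A ⥤ B) [F.Additive] (J : CochainComplex A ℕ)
    (q : ℕ) :
    ((F.mapHomologicalComplex (ComplexShape.up ℕ)).obj (shiftedC J q)).homology 0 ⟶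
      ((F.mapHomologicalComplex (ComplexShape.up ℕ)).obj J).homology q :=
  HomologicalComplex.homologyMap (mapShiftedIso F J q).hom 0 ≫
    shiftHomologyMap₀ ((F.mapHomologicalComplex (ComplexShape.up ℕ)).obj J) q

/-- The map `C^m ⟶ H^0(C_{[m+1]})` sending `x` to the class of `δ x`; its image is the
image of `C^m` in `H^0(C_{[m+1]}) = Z^{m+1}`. -/
noncomputable def tauMap (C : CochainComplex A ℕ) (m : ℕ) :
    C.X m ⟶ (shiftedC C (m + 1)).homology 0 :=
  (shiftedC C (m + 1)).liftCycles
    (show C.X m ⟶ (shiftedC C (m + 1)).X 0 from C.d m (m + 1)) 1 (by simp)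
    (by
      rw [show (shiftedC C (m+1)).d 0 1 = C.d (m+1+0) (m+1+0+1) from shiftedC_d _ _ _]
      exact C.d_comp_d _ _ _) ≫ (shiftedC C (m + 1)).homologyπ 0

/-- Since `F` is left exact, `F` applied to the cycles of `J` maps to the cycles
of `F(J)`; this is the comparison morphism (an isomorphism when `F` is left exact). -/
noncomputable def cyclesComparison (F : A ⥤ B) [F.Additive] (J : CochainComplex A ℕ)
    (n : ℕ) :
    F.obj (J.cycles n) ⟶ ((F.mapHomologicalComplex (ComplexShape.up ℕ)).obj J).cycles n :=
  ((F.mapHomologicalComplex (ComplexShape.up ℕ)).obj J).liftCycles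
    (F.map (J.iCycles n)) (n + 1) (by simp)
    (by
      show F.map (J.iCycles n) ≫ F.map (J.d n (n+1)) = 0
      rw [← F.map_comp, HomologicalComplex.iCycles_d, F.map_zero])

end MoreDefs

section ResCycles

variable {A : Type*} [Category A] [Abelian A]
variable {B : Type*} [Category B] [Abelian B]

/-- The comparison `M ⟶ Z^0 = ker(δ^0)` induced by the augmentation of a resolution
`0 → M → J•`; it is an isomorphism because the resolution is exact. -/
noncomputable def resolutionToCycles (J : CochainComplex A ℕ) {M : A}
    (ι : (CochainComplex.single₀ A).obj M ⟶ J) : M ⟶ J.cycles 0 :=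
  J.liftCycles (ι.f 0) 1 (by simp)
    (by
      exact (ι.comm 0 1).trans (by simp <;> exact Limits.zero_comp))

instance isIso_resolutionToCycles (J : CochainComplex A ℕ) {M : A}
    (ι : (CochainComplex.single₀ A).obj M ⟶ J) [QuasiIso ι] :
    IsIso (resolutionToCycles J ι) := by
  have : resolutionToCycles J ι =
      ((HomologicalComplex.singleObjHomologySelfIso (ComplexShape.up ℕ) 0 M).symm ≪≫
        isoOfQuasiIsoAt ι 0 ≪≫ (CochainComplex.isoHomologyπ₀ J).symm).hom := by
    rw [← cancel_mono (J.iCycles 0)]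
    simp [resolutionToCycles]
    rw [← HomologicalComplex.singleObjCyclesSelfIso_inv_homologyπ_assoc]
    simp [CochainComplex.isoHomologyπ₀]
    refine (J.liftCycles_i _ _ _ _).trans ?_
    first
      | (erw [HomologicalComplex.singleObjCyclesSelfIso_inv_iCycles_assoc]
         first | exact (Category.id_comp _).symm | simp [HomologicalComplex.singleObjXSelf,
           HomologicalComplex.singleObjXIsoOfEq])
      | (simp [HomologicalComplex.singleObjCyclesSelfIso, HomologicalComplex.singleObjXSelf,
           HomologicalComplex.singleObjXIsoOfEq])
  rw [this]
  infer_instance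

end ResCycles

section Dchain

variable {A : Type*} [Category A] [Abelian A] [EnoughInjectives A]
variable {B : Type*} [Category B] [Abelian B]

/-- The composite of connecting homomorphisms
`R^pF Z^r → R^{p+1}F Z^{r-1} → ⋯ → R^{p+r}F Z^0` appearing in the dimension
shifting isomorphism, computed from choices of horseshoe data for the short exact
sequences `E_q = (0 → Z^{q-1} → J^{q-1} → Z^q → 0)`. -/
noncomputable def dchain (F : A ⥤ B) [F.Additive] (J : CochainComplex A ℕ)
    (D : ∀ q : ℕ, HorseshoeData (cyclesSeq J q)) :
    (r : ℕ) → (p : ℕ) →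
      ((F.rightDerived p).obj (J.cycles r) ⟶ (F.rightDerived (p + r)).obj (J.cycles 0))
  | 0, _ => 𝟙 _
  | (r+1), p =>
      derivedδ F (D r) p ≫ dchain F J D r (p+1) ≫
        eqToHom (congrArg (fun k => (F.rightDerived k).obj (J.cycles 0))
          (show p + 1 + r = p + (r + 1) by omega))

end Dchain

/-!
The square is compared with the one defining `∂_𝓔` through a morphism of short exact sequences
`φ : 𝐄 ⟶ D` into the horseshoe resolution `D.I₁ ⟶ D.I₂ ⟶ D.I₃` of `𝓔`. Its first component is
`J• ⟶ I₁• ⟶ D.I₁`; its middle component `L• ⟶ D.I₂` is built degree by degree, extending along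
the monomorphisms `u` and correcting through `v` by maps out of `K•`, which exist because `K•` is
exact and `D.I₂` is injective; its last component is then induced on the cokernel `K•` of `u`.
The first and last components lie over the identities of `A` and `B`, so they agree up to homotopy
with the comparison maps defining the `c^i`, and the square is the naturality of connecting
homomorphisms along `Fφ`.

That `F𝐄` is short exact holds degreewise: if `R¹F X₁ = 0` then `F` keeps
`0 → X₁ → X₂ → X₃ → 0` exact, since `X₂ → X₃` is the pullback of `I⁰ → I⁰/X₁` for an injective
resolution `I•` of `X₁`, and `F(I⁰) → F(I⁰/X₁)` is onto because `H¹(F I•) = R¹F X₁ = 0`.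
-/

section Resolution

variable {A : Type*} [Category A] [Abelian A] {M : A} {K : CochainComplex A ℕ}

lemma ι_f_zero_comp_d_zero_one (ι : (CochainComplex.single₀ A).obj M ⟶ K) :
    ι.f 0 ≫ K.d 0 1 = 0 :=
  (ι.comm 0 1).trans (by simp; exact zero_comp)

lemma resolutionToCycles_comp_iCycles (ι : (CochainComplex.single₀ A).obj M ⟶ K) :
    resolutionToCycles K ι ≫ K.iCycles 0 = ι.f 0 :=
  K.liftCycles_i _ _ _ _

lemma exact₀_of_quasiIso (ι : (CochainComplex.single₀ A).obj M ⟶ K) [QuasiIso ι] :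
    (ShortComplex.mk _ _ (ι_f_zero_comp_d_zero_one ι)).Exact := by
  let φ : ShortComplex.mk _ _ (ι_f_zero_comp_d_zero_one ι) ⟶
      ShortComplex.mk _ _ (K.iCycles_d 0 1) :=
    { τ₁ := resolutionToCycles K ι, τ₂ := 𝟙 _, τ₃ := 𝟙 _
      comm₁₂ := (resolutionToCycles_comp_iCycles ι).trans (Category.comp_id _).symm }
  have : IsIso φ.τ₁ := isIso_resolutionToCycles K ι
  rw [ShortComplex.exact_iff_of_epi_of_isIso_of_mono φ]
  exact ShortComplex.exact_of_f_is_kernel _ (K.cyclesIsKernel 0 1 (by simp))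

lemma mono_ι_f_zero (ι : (CochainComplex.single₀ A).obj M ⟶ K) [QuasiIso ι] :
    Mono (ι.f 0) := by
  rw [← resolutionToCycles_comp_iCycles ι]
  exact mono_comp (resolutionToCycles K ι) (K.iCycles 0)

lemma exact_succ_of_quasiIso (ι : (CochainComplex.single₀ A).obj M ⟶ K) [QuasiIso ι] (n : ℕ) :
    (ShortComplex.mk _ _ (K.d_comp_d n (n + 1) (n + 2))).Exact := by
  have : K.ExactAt (n + 1) := by
    rw [← quasiIsoAt_iff_exactAt ι (n + 1) (CochainComplex.exactAt_succ_single_obj _ _)]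
    infer_instance
  exact (K.exactAt_iff' n (n + 1) (n + 2) (by simp) (by simp)).1 this

lemma CategoryTheory.InjectiveResolution.ι_comp_desc_id {M : A} (I I' : InjectiveResolution M) :
    I.ι ≫ InjectiveResolution.desc (𝟙 M) I' I = I'.ι := by
  simp [InjectiveResolution.desc_commutes]

end Resolution

section Homotopy

variable {A : Type*} [Category A] [Abelian A] {M : A} {K T : CochainComplex A ℕ}
  (ι : (CochainComplex.single₀ A).obj M ⟶ K) [QuasiIso ι] [∀ n, Injective (T.X n)]

-- As `InjectiveResolution.descHomotopyZero`, which asks the source to be an injective resolution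
-- although its construction only uses the exactness of the source.
noncomputable def homotopyZeroOfQuasiIso (f : K ⟶ T) (hf : ι ≫ f = 0) : Homotopy f 0 := by
  have hf₀ : ι.f 0 ≫ f.f 0 = 0 := by simpa using congr_hom hf 0
  let h₀ := (exact₀_of_quasiIso ι).descToInjective (f.f 0) hf₀
  have hh₀ : K.d 0 1 ≫ h₀ = f.f 0 := (exact₀_of_quasiIso ι).comp_descToInjective _ _
  have hh₁ : K.d 0 1 ≫ (f.f 1 - h₀ ≫ T.d 0 1) = 0 := by
    rw [Preadditive.comp_sub, reassoc_of% hh₀, f.comm, sub_self]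
  refine Homotopy.mkCoinductive _ h₀ hh₀.symm
    ((exact_succ_of_quasiIso ι 0).descToInjective _ hh₁) ?_ (fun n ⟨g, g', w⟩ => ?_)
  · rw [(exact_succ_of_quasiIso ι 0).comp_descToInjective]
    abel
  · have hg : K.d (n + 1) (n + 2) ≫ (f.f (n + 2) - g' ≫ T.d (n + 1) (n + 2)) = 0 := by
      rw [Preadditive.comp_sub, ← f.comm, w, Preadditive.add_comp, Category.assoc,
        Category.assoc, T.d_comp_d, comp_zero, zero_add, sub_self]
    refine ⟨(exact_succ_of_quasiIso ι (n + 1)).descToInjective _ hg, ?_⟩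
    rw [(exact_succ_of_quasiIso ι (n + 1)).comp_descToInjective]
    abel

noncomputable def homotopyOfQuasiIso (f g : K ⟶ T) (h : ι ≫ f = ι ≫ g) : Homotopy f g :=
  Homotopy.equivSubZero.symm
    (homotopyZeroOfQuasiIso ι (f - g) (by rw [Preadditive.comp_sub, h, sub_self]))

end Homotopy

section ShortComplexLemmas

variable {A : Type*} [Category A] [Abelian A]

lemma CategoryTheory.ShortComplex.isPullback_τ₂_g {S₁ S₂ : ShortComplex A} (φ : S₁ ⟶ S₂)
    (h₁ : S₁.Exact) [Epi S₁.g] (h₂ : S₂.Exact) [Mono S₂.f] [IsIso φ.τ₁] :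
    IsPullback φ.τ₂ S₁.g S₂.g φ.τ₃ := by
  let C : ShortComplex A := ShortComplex.mk (biprod.lift φ.τ₂ S₁.g) (biprod.desc S₂.g (-φ.τ₃))
    (by simp [φ.comm₂₃])
  have hC : C.Exact := by
    rw [ShortComplex.exact_iff_exact_up_to_refinements]
    intro T x hx
    have hx' : (x ≫ biprod.fst) ≫ S₂.g = (x ≫ biprod.snd) ≫ φ.τ₃ := by
      simpa [C, biprod.desc_eq, sub_eq_zero, ← sub_eq_add_neg] using hx
    obtain ⟨T₁, π₁, _, y, hy⟩ := surjective_up_to_refinements_of_epi S₁.g (x ≫ biprod.snd)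
    obtain ⟨T₂, π₂, _, z, hz⟩ := h₂.exact_up_to_refinements (π₁ ≫ x ≫ biprod.fst - y ≫ φ.τ₂)
      (by simp [hx', reassoc_of% hy, φ.comm₂₃])
    refine ⟨T₂, π₂ ≫ π₁, inferInstance, π₂ ≫ y + z ≫ inv φ.τ₁ ≫ S₁.f, ?_⟩
    ext
    · simp only [C, Preadditive.comp_sub] at hz
      simp [C, ← φ.comm₁₂, ← hz]
    · simp [C, hy]
  have : Mono C.f := by
    rw [Preadditive.mono_iff_cancel_zero]
    intro T x hx
    have hx₂ : x ≫ φ.τ₂ = 0 := by simpa [C] using hx =≫ biprod.fst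
    have hx₃ : x ≫ S₁.g = 0 := by simpa [C] using hx =≫ biprod.snd
    obtain ⟨T', π, _, y, hy⟩ := h₁.exact_up_to_refinements x hx₃
    have : y = 0 := by
      rw [← cancel_mono (φ.τ₁ ≫ S₂.f), zero_comp, φ.comm₁₂, ← reassoc_of% hy, hx₂, comp_zero]
    rw [← cancel_epi π, hy, this, zero_comp, comp_zero]
  have sq : CommSq φ.τ₂ S₁.g S₂.g φ.τ₃ := ⟨φ.comm₂₃⟩
  exact ⟨sq, ⟨sq.isLimitEquivIsLimitKernelFork.symm hC.fIsKernel⟩⟩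

lemma CategoryTheory.ShortComplex.Exact.epi_comp {X₀ X₁ X₂ X₃ : A} {e : X₀ ⟶ X₁} [Epi e]
    {f : X₁ ⟶ X₂} {g : X₂ ⟶ X₃} {hfg : f ≫ g = 0} (h : (ShortComplex.mk f g hfg).Exact)
    {f' : X₀ ⟶ X₂} (hf' : e ≫ f = f') {hf'g : f' ≫ g = 0} :
    (ShortComplex.mk f' g hf'g).Exact := by
  subst hf'
  exact (ShortComplex.exact_iff_of_epi_of_isIso_of_mono
    { τ₁ := e, τ₂ := 𝟙 _, τ₃ := 𝟙 _ : ShortComplex.mk _ g hf'g ⟶ ShortComplex.mk f g hfg }).2 h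

lemma shortExact_degreewise {J L K : CochainComplex A ℕ} {u : J ⟶ L} {v : L ⟶ K}
    {huv : u ≫ v = 0} (hE : (ShortComplex.mk u v huv).ShortExact) (n : ℕ) :
    (ShortComplex.mk (u.f n) (v.f n) (by rw [← comp_f, huv, zero_f])).ShortExact :=
  (shortExact_iff_degreewise_shortExact _).1 hE n

end ShortComplexLemmas

section FAcyclic

variable {A : Type*} [Category A] [Abelian A] {B : Type*} [Category B] [Abelian B]

lemma epi_map_cokernel_π_of_exact (F : A ⥤ B) [F.Additive] [F.PreservesMonomorphisms]
    {X X₀ X₁ X₂ : A} {ι : X ⟶ X₀} {d₀ : X₀ ⟶ X₁} {d₁ : X₁ ⟶ X₂} {hι : ι ≫ d₀ = 0}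
    (hexact : (ShortComplex.mk ι d₀ hι).Exact) (hd : d₀ ≫ d₁ = 0)
    (hF : (ShortComplex.mk (F.map d₀) (F.map d₁) (by rw [← F.map_comp, hd, F.map_zero])).Exact) :
    Epi (F.map (cokernel.π ι)) := by
  let j := cokernel.desc ι d₀ hι
  have : Mono j := hexact.mono_cokernelDesc
  have hπj : cokernel.π ι ≫ j = d₀ := cokernel.π_desc _ _ _
  have hjd : j ≫ d₁ = 0 := by
    rw [← cancel_epi (cokernel.π ι), ← Category.assoc, hπj, hd, comp_zero]
  rw [epi_iff_surjective_up_to_refinements]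
  intro T y
  obtain ⟨T', π, _, x, hx⟩ := hF.exact_up_to_refinements (y ≫ F.map j)
    (by dsimp; rw [Category.assoc, ← F.map_comp, hjd, F.map_zero, comp_zero])
  refine ⟨T', π, inferInstance, x, ?_⟩
  rw [← cancel_mono (F.map j)]
  simpa [← hπj] using hx

lemma CategoryTheory.InjectiveResolution.exact_map_d_of_isZero_rightDerived_one
    [EnoughInjectives A] {X : A} (I : InjectiveResolution X) (F : A ⥤ B) [F.Additive]
    (hX : IsZero ((F.rightDerived 1).obj X)) :
    (ShortComplex.mk (F.map (I.cocomplex.d 0 1)) (F.map (I.cocomplex.d 1 2))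
      (by rw [← F.map_comp, d_comp_d, F.map_zero])).Exact := by
  have : ((F.mapHomologicalComplex _).obj I.cocomplex).ExactAt 1 := by
    rw [exactAt_iff_isZero_homology]
    exact hX.of_iso (I.isoRightDerivedObj F 1).symm
  exact (exactAt_iff' _ 0 1 2 (by simp) (by simp)).1 this

lemma epi_map_g_of_isZero_rightDerived_one [EnoughInjectives A] (F : A ⥤ B) [F.Additive]
    [PreservesFiniteLimits F] {S : ShortComplex A} (hS : S.ShortExact)
    (hX : IsZero ((F.rightDerived 1).obj S.X₁)) : Epi (F.map S.g) := by
  have := hS.mono_f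
  have := hS.epi_g
  let I := InjectiveResolution.of S.X₁
  let ι : S.X₁ ⟶ I.cocomplex.X 0 := I.ι.f 0
  have : Mono ι := inferInstanceAs (Mono (I.ι.f 0))
  let h := Injective.factorThru ι S.f
  have hh : S.f ≫ h = ι := Injective.comp_factorThru _ _
  let φ : S ⟶ ShortComplex.mk ι (cokernel.π ι) (cokernel.condition ι) :=
    { τ₁ := 𝟙 _, τ₂ := h, τ₃ := hS.exact.desc (h ≫ cokernel.π ι) (by simp [reassoc_of% hh])
      comm₁₂ := by simp [hh] }
  have sq := (ShortComplex.isPullback_τ₂_g φ hS.exact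
    (ShortComplex.exact_of_g_is_cokernel _ (cokernelIsCokernel ι))).map F
  have := epi_map_cokernel_π_of_exact F I.exact₀ (I.cocomplex.d_comp_d 0 1 2)
    (I.exact_map_d_of_isZero_rightDerived_one F hX)
  exact MorphismProperty.IsStableUnderBaseChange.of_isPullback
    (P := MorphismProperty.epimorphisms B) sq this

lemma CategoryTheory.ShortComplex.ShortExact.map_of_isZero_rightDerived_one [EnoughInjectives A]
    (F : A ⥤ B) [F.Additive] [PreservesFiniteLimits F] {S : ShortComplex A} (hS : S.ShortExact)
    (hX : IsZero ((F.rightDerived 1).obj S.X₁)) :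
    (S.map F).ShortExact := by
  have := hS.mono_f
  have := epi_map_g_of_isZero_rightDerived_one F hS hX
  exact .mk' (ShortComplex.exact_of_f_is_kernel _ (KernelFork.mapIsLimit _ hS.fIsKernel F))
    (inferInstanceAs (Mono (F.map S.f))) this

lemma shortExact_map_of_isFAcyclic [EnoughInjectives A] (F : A ⥤ B) [F.Additive]
    [PreservesFiniteLimits F] {J L K : CochainComplex A ℕ} {u : J ⟶ L} {v : L ⟶ K} {huv : u ≫ v = 0}
    (hE : (ShortComplex.mk u v huv).ShortExact) (hJ : ∀ n, IsFAcyclic F (J.X n)) :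
    ((ShortComplex.mk u v huv).map (F.mapHomologicalComplex (ComplexShape.up ℕ))).ShortExact := by
  rw [shortExact_iff_degreewise_shortExact]
  exact fun n => (shortExact_degreewise hE n).map_of_isZero_rightDerived_one F (hJ n 1 le_rfl)

end FAcyclic

section Lift

variable {A : Type*} [Category A] [Abelian A] {J L K I : CochainComplex A ℕ}
  {u : J ⟶ L} {v : L ⟶ K} {huv : u ≫ v = 0}

lemma exists_lift_zero {S : ShortComplex A} (hS : S.ShortExact)
    (hE : (ShortComplex.mk u v huv).ShortExact)
    {ιJ : (CochainComplex.single₀ A).obj S.X₁ ⟶ J} {ιL : (CochainComplex.single₀ A).obj S.X₂ ⟶ L}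
    {ιK : (CochainComplex.single₀ A).obj S.X₃ ⟶ K} [QuasiIso ιK]
    (hu : ιJ ≫ u = (CochainComplex.single₀ A).map S.f ≫ ιL)
    (hv : ιL ≫ v = (CochainComplex.single₀ A).map S.g ≫ ιK)
    [∀ n, Injective (I.X n)] {ιI : (CochainComplex.single₀ A).obj S.X₂ ⟶ I} (q : J ⟶ I)
    (hq : ιJ ≫ q = (CochainComplex.single₀ A).map S.f ≫ ιI) :
    ∃ p : L.X 0 ⟶ I.X 0, u.f 0 ≫ p = q.f 0 ∧ ιL.f 0 ≫ p = ιI.f 0 := by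
  let ιJ₀ : S.X₁ ⟶ J.X 0 := ιJ.f 0
  let ιL₀ : S.X₂ ⟶ L.X 0 := ιL.f 0
  let ιK₀ : S.X₃ ⟶ K.X 0 := ιK.f 0
  let ιI₀ : S.X₂ ⟶ I.X 0 := ιI.f 0
  have hu₀ : ιJ₀ ≫ u.f 0 = S.f ≫ ιL₀ := by simpa using congr_hom hu 0
  have hv₀ : ιL₀ ≫ v.f 0 = S.g ≫ ιK₀ := by simpa using congr_hom hv 0
  have hq₀ : ιJ₀ ≫ q.f 0 = S.f ≫ ιI₀ := by simpa using congr_hom hq 0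
  have huv₀ : u.f 0 ≫ v.f 0 = 0 := by rw [← comp_f, huv, zero_f]
  have : Mono ιK₀ := mono_ι_f_zero ιK
  have := (shortExact_degreewise hE 0).mono_f
  have := hS.epi_g
  let p₀ := Injective.factorThru (q.f 0) (u.f 0)
  have hp₀ : u.f 0 ≫ p₀ = q.f 0 := Injective.comp_factorThru _ _
  obtain ⟨e, he⟩ := hS.exact.desc' (ιL₀ ≫ p₀ - ιI₀)
    (by rw [Preadditive.comp_sub, ← reassoc_of% hu₀, hp₀, hq₀, sub_self])
  refine ⟨p₀ - v.f 0 ≫ Injective.factorThru e ιK₀, ?_, ?_⟩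
  · rw [Preadditive.comp_sub, hp₀, reassoc_of% huv₀, zero_comp, sub_zero]
  · change ιL₀ ≫ _ = ιI₀
    rw [Preadditive.comp_sub, reassoc_of% hv₀, Injective.comp_factorThru, he, sub_sub_cancel]

-- `a` is the map arriving in `L^n`: the augmentation for `n = 0`, the differential afterwards.
-- An extension `p₀` of `q` to `L^{n+1}` fails to be a chain map by a map vanishing on `J^n`; it
-- factors through `v`, then through `d_K` by exactness, and `v` composed with it corrects `p₀`.
lemma exists_lift_succ (hE : (ShortComplex.mk u v huv).ShortExact) [∀ n, Injective (I.X n)]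
    (q : J ⟶ I) (n : ℕ) {P : A} (a : P ⟶ L.X n) (ha : a ≫ L.d n (n + 1) = 0)
    (hK : (ShortComplex.mk (a ≫ v.f n) (K.d n (n + 1))
      (by rw [Category.assoc, v.comm, reassoc_of% ha, zero_comp])).Exact)
    (p : L.X n ⟶ I.X n) (hp : u.f n ≫ p = q.f n) (hap : a ≫ p ≫ I.d n (n + 1) = 0) :
    ∃ p' : L.X (n + 1) ⟶ I.X (n + 1),
      u.f (n + 1) ≫ p' = q.f (n + 1) ∧ L.d n (n + 1) ≫ p' = p ≫ I.d n (n + 1) := by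
  have huv' : u.f (n + 1) ≫ v.f (n + 1) = 0 := by rw [← comp_f, huv, zero_f]
  have := (shortExact_degreewise hE (n + 1)).mono_f
  have := (shortExact_degreewise hE n).epi_g
  let p₀ := Injective.factorThru (q.f (n + 1)) (u.f (n + 1))
  have hp₀ : u.f (n + 1) ≫ p₀ = q.f (n + 1) := Injective.comp_factorThru _ _
  obtain ⟨e, he⟩ := (shortExact_degreewise hE n).exact.desc'
    (L.d n (n + 1) ≫ p₀ - p ≫ I.d n (n + 1)) (by
      dsimp only
      rw [Preadditive.comp_sub, reassoc_of% (u.comm n (n + 1)), hp₀, reassoc_of% hp, q.comm,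
        sub_self])
  dsimp only at he
  have hae : (a ≫ v.f n) ≫ e = 0 := by
    rw [Category.assoc, he, Preadditive.comp_sub, reassoc_of% ha, zero_comp, hap, sub_zero]
  refine ⟨p₀ - v.f (n + 1) ≫ hK.descToInjective e hae, ?_, ?_⟩
  · rw [Preadditive.comp_sub, hp₀, reassoc_of% huv', zero_comp, sub_zero]
  · rw [Preadditive.comp_sub, ← reassoc_of% (v.comm n (n + 1)), hK.comp_descToInjective, he,
      sub_sub_cancel]

lemma exists_lift {S : ShortComplex A} (hS : S.ShortExact)
    (hE : (ShortComplex.mk u v huv).ShortExact)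
    {ιJ : (CochainComplex.single₀ A).obj S.X₁ ⟶ J} {ιL : (CochainComplex.single₀ A).obj S.X₂ ⟶ L}
    {ιK : (CochainComplex.single₀ A).obj S.X₃ ⟶ K} [QuasiIso ιK]
    (hu : ιJ ≫ u = (CochainComplex.single₀ A).map S.f ≫ ιL)
    (hv : ιL ≫ v = (CochainComplex.single₀ A).map S.g ≫ ιK)
    [∀ n, Injective (I.X n)] {ιI : (CochainComplex.single₀ A).obj S.X₂ ⟶ I} (q : J ⟶ I)
    (hq : ιJ ≫ q = (CochainComplex.single₀ A).map S.f ≫ ιI) :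
    ∃ p : L ⟶ I, u ≫ p = q ∧ ιL ≫ p = ιI := by
  obtain ⟨p₀, hp₀, hιp₀⟩ := exists_lift_zero hS hE hu hv q hq
  have := hS.epi_g
  obtain ⟨p₁, hp₁, hd₁⟩ := exists_lift_succ hE q 0 (ιL.f 0) (ι_f_zero_comp_d_zero_one ιL)
    ((exact₀_of_quasiIso ιK).epi_comp (e := S.g) (by simpa using (congr_hom hv 0).symm))
    p₀ hp₀ (by rw [reassoc_of% hιp₀, ι_f_zero_comp_d_zero_one])
  have step : ∀ n (p : L.X (n + 1) ⟶ I.X (n + 1)), u.f (n + 1) ≫ p = q.f (n + 1) →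
      L.d n (n + 1) ≫ p ≫ I.d (n + 1) (n + 2) = 0 →
      ∃ p' : L.X (n + 2) ⟶ I.X (n + 2), u.f (n + 2) ≫ p' = q.f (n + 2) ∧
        L.d (n + 1) (n + 2) ≫ p' = p ≫ I.d (n + 1) (n + 2) := fun n p hp hdp =>
    have := (shortExact_degreewise hE n).epi_g
    exists_lift_succ hE q (n + 1) (L.d n (n + 1)) (L.d_comp_d _ _ _)
      ((exact_succ_of_quasiIso ιK n).epi_comp (v.comm n (n + 1))) p hp hdp
  choose next hnext₁ hnext₂ using step
  let seq : (n : ℕ) → {p : L.X (n + 1) ⟶ I.X (n + 1) //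
      u.f (n + 1) ≫ p = q.f (n + 1) ∧ L.d n (n + 1) ≫ p ≫ I.d (n + 1) (n + 2) = 0} :=
    fun n => Nat.rec ⟨p₁, hp₁, by rw [reassoc_of% hd₁, I.d_comp_d, comp_zero]⟩
      (fun n p => ⟨next n p.1 p.2.1 p.2.2, hnext₁ _ _ _ _,
        by rw [reassoc_of% (hnext₂ _ _ _ _), I.d_comp_d, comp_zero]⟩) n
  let p : L ⟶ I :=
    { f := fun | 0 => p₀ | n + 1 => (seq n).1
      comm' := by
        rintro i j rfl
        cases i with
        | zero => exact hd₁.symm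
        | succ n => exact (hnext₂ _ _ _ _).symm }
  refine ⟨p, ?_, from_single_hom_ext hιp₀⟩
  ext (_ | n)
  · exact hp₀
  · exact (seq n).2.1

end Lift

section Comparison

variable {A : Type*} [Category A] [Abelian A]

lemma exists_hom_to_horseshoeData {S : ShortComplex A} (hS : S.ShortExact)
    {J L K : CochainComplex A ℕ} {u : J ⟶ L} {v : L ⟶ K} {huv : u ≫ v = 0}
    (hE : (ShortComplex.mk u v huv).ShortExact)
    {ιJ : (CochainComplex.single₀ A).obj S.X₁ ⟶ J} {ιL : (CochainComplex.single₀ A).obj S.X₂ ⟶ L}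
    {ιK : (CochainComplex.single₀ A).obj S.X₃ ⟶ K} [QuasiIso ιK]
    (hu : ιJ ≫ u = (CochainComplex.single₀ A).map S.f ≫ ιL)
    (hv : ιL ≫ v = (CochainComplex.single₀ A).map S.g ≫ ιK)
    (D : HorseshoeData S) (τ₁ : J ⟶ D.I₁.cocomplex) (hτ₁ : ιJ ≫ τ₁ = D.I₁.ι) :
    ∃ φ : ShortComplex.mk u v huv ⟶ ShortComplex.mk D.f D.g D.zero,
      φ.τ₁ = τ₁ ∧ ιK ≫ φ.τ₃ = D.I₃.ι := by
  obtain ⟨p, hp, hιp⟩ := exists_lift hS hE hu hv (τ₁ ≫ D.f) (by rw [reassoc_of% hτ₁, D.comm₁])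
  have := hE.epi_g
  obtain ⟨w, hw⟩ := hE.exact.desc' (p ≫ D.g) (by dsimp; rw [reassoc_of% hp, D.zero, comp_zero])
  refine ⟨{ τ₁ := τ₁, τ₂ := p, τ₃ := w, comm₁₂ := hp.symm, comm₂₃ := hw.symm }, rfl, ?_⟩
  have := hS.epi_g
  dsimp
  rw [← cancel_epi ((CochainComplex.single₀ A).map S.g), ← reassoc_of% hv, hw, reassoc_of% hιp,
    D.comm₂]

end Comparison

section CanonicalMap

variable {A : Type*} [Category A] [Abelian A] [EnoughInjectives A]
  {B : Type*} [Category B] [Abelian B] (F : A ⥤ B) [F.Additive]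

lemma canonicalMap_eq {M : A} (J : FAcyclicResolution F M) {I I' : InjectiveResolution M}
    {f : J.cocomplex ⟶ I.cocomplex} {f' : J.cocomplex ⟶ I'.cocomplex}
    (hf : J.ι ≫ f = I.ι) (hf' : J.ι ≫ f' = I'.ι) (n : ℕ) :
    canonicalMap F J I f n = canonicalMap F J I' f' n := by
  let θ := InjectiveResolution.desc (𝟙 M) I' I
  have hθ : I.ι.f 0 ≫ θ.f 0 = 𝟙 M ≫ I'.ι.f 0 := InjectiveResolution.desc_commutes_zero _ _ _
  have hfθ : homologyMap ((F.mapHomologicalComplex _).map (f ≫ θ)) n =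
      homologyMap ((F.mapHomologicalComplex _).map f') n :=
    (F.mapHomotopy (homotopyOfQuasiIso J.ι (f ≫ θ) f'
      (by rw [reassoc_of% hf, InjectiveResolution.ι_comp_desc_id, hf']))).homologyMap_eq n
  have hnat := InjectiveResolution.isoRightDerivedObj_inv_naturality _ I I' θ hθ F n
  rw [CategoryTheory.Functor.map_id, Category.comp_id] at hnat
  rw [canonicalMap, canonicalMap, hnat, ← hfθ, Functor.map_comp, homologyMap_comp]
  exact (Category.assoc _ _ _).symm

lemma δ_comp_canonicalMap {S : ShortComplex A} {JA : FAcyclicResolution F S.X₁}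
    {KB : FAcyclicResolution F S.X₃} {L : CochainComplex A ℕ} {u : JA.cocomplex ⟶ L}
    {v : L ⟶ KB.cocomplex} {huv : u ≫ v = 0}
    (hFE : ((ShortComplex.mk u v huv).map (F.mapHomologicalComplex (ComplexShape.up ℕ))).ShortExact)
    (D : HorseshoeData S) (φ : ShortComplex.mk u v huv ⟶ ShortComplex.mk D.f D.g D.zero) (i : ℕ) :
    hFE.δ i (i + 1) rfl ≫ canonicalMap F JA D.I₁ φ.τ₁ (i + 1) =
      canonicalMap F KB D.I₃ φ.τ₃ i ≫ derivedδ F D i := by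
  have : hFE.δ i (i + 1) rfl ≫ homologyMap ((F.mapHomologicalComplex _).map φ.τ₁) (i + 1) =
      homologyMap ((F.mapHomologicalComplex _).map φ.τ₃) i ≫ (D.map_shortExact F).δ i (i + 1) rfl :=
    HomologySequence.δ_naturality ((F.mapHomologicalComplex _).mapShortComplex.map φ) hFE
      (D.map_shortExact F) i (i + 1) rfl
  rw [canonicalMap, canonicalMap, derivedδ]
  exact (Category.assoc _ _ _).symm.trans ((congrArg (· ≫ _) this).trans
    ((Category.assoc _ _ _).trans ((congrArg (_ ≫ ·) (Iso.inv_hom_id_assoc _ _).symm).trans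
      (Category.assoc _ _ _).symm)))

end CanonicalMap

/-- **Lemma A.** Let `𝓔 = (0 → A → C → B → 0)` be a short exact sequence
in `𝒜` (encoded as a short complex `S` with `S.X₁ = A`, `S.X₂ = C`, `S.X₃ = B`), let
`0 → A → J•`, `0 → B → K•`, `0 → C → L•` be `F`-acyclic resolutions, and let
`𝐄 = (0 → J• → L• → K• → 0)` be a short exact sequence of complexes whose augmentations
form a commutative diagram with `𝓔`.  Then (`F𝐄` is a short exact sequence of complexes
and) for every `i ≥ 0` the square commutes:
`c^{i+1} ∘ δ^i_{F𝐄} = ∂^i_𝓔 ∘ c^i`, where `δ^i_{F𝐄}` is the connecting homomorphism of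
`0 → FJ• → FL• → FK• → 0`, `∂^i_𝓔` is the connecting homomorphism of the
derived-functor long exact sequence of `𝓔` (computed by a horseshoe datum `D`), and
`c^i, c^{i+1}` are the canonical isomorphisms. -/
theorem sign_lemma_stmt1 {A : Type*} [Category A] [Abelian A] [EnoughInjectives A]
    {B : Type*} [Category B] [Abelian B]
    (F : A ⥤ B) [F.Additive] [PreservesFiniteLimits F]
    (S : ShortComplex A) (hS : S.ShortExact)
    (JA : FAcyclicResolution F S.X₁) (KB : FAcyclicResolution F S.X₃)
    (LC : FAcyclicResolution F S.X₂)
    (u : JA.cocomplex ⟶ LC.cocomplex) (v : LC.cocomplex ⟶ KB.cocomplex)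
    (huv : u ≫ v = 0) (hE : (ShortComplex.mk u v huv).ShortExact)
    (hu : JA.ι ≫ u = (CochainComplex.single₀ A).map S.f ≫ LC.ι)
    (hv : LC.ι ≫ v = (CochainComplex.single₀ A).map S.g ≫ KB.ι)
    (I₁ : InjectiveResolution S.X₁) (f₁ : JA.cocomplex ⟶ I₁.cocomplex)
    (hf₁ : JA.ι ≫ f₁ = I₁.ι)
    (I₃ : InjectiveResolution S.X₃) (f₃ : KB.cocomplex ⟶ I₃.cocomplex)
    (hf₃ : KB.ι ≫ f₃ = I₃.ι)
    (D : HorseshoeData S) (i : ℕ) :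
    ∃ hFE : ((ShortComplex.mk u v huv).map
        (F.mapHomologicalComplex (ComplexShape.up ℕ))).ShortExact,
      hFE.δ i (i + 1) rfl ≫ canonicalMap F JA I₁ f₁ (i + 1) =
        canonicalMap F KB I₃ f₃ i ≫ derivedδ F D i := by
  have hτ₁ : JA.ι ≫ f₁ ≫ InjectiveResolution.desc (𝟙 S.X₁) D.I₁ I₁ = D.I₁.ι := by
    rw [reassoc_of% hf₁, InjectiveResolution.ι_comp_desc_id]
  obtain ⟨φ, hφ₁, hφ₃⟩ := exists_hom_to_horseshoeData hS hE hu hv D _ hτ₁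
  refine ⟨shortExact_map_of_isFAcyclic F hE JA.acyclic, ?_⟩
  rw [canonicalMap_eq F JA hf₁ (hφ₁ ▸ hτ₁), canonicalMap_eq F KB hf₃ hφ₃]
  exact δ_comp_canonicalMap F _ D φ i
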